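/- In a qualitative conditional probability structure satisfying Axioms 1–6, if H₁ and H₂ are disjoint and E|H₁ ∼ E|H₂ (both non-null), then E|(H₁ ∪ H₂) ∼ E|H₁ ∼ E|H₂. -/
import Mathlib


open Set

/-- `QNull le A` : the event `A` is null, i.e. `A|Δ ⪯ ∅|Δ` (Axiom 2). -/
def QNull {Δ : Type*} (le : Set Δ → Set Δ → Set Δ → Set Δ → Prop) (A : Set Δ) : Prop :=
  le A univ ∅ univ

/-- `QLt le A B C D` : `A|B ≺ C|D`, the strict part of the ordering. -/
def QLt {Δ : Type*} (le : Set Δ → Set Δ → Set Δ → Set Δ → Prop) (A B C D : Set Δ) : Prop :=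
  le A B C D ∧ ¬ le C D A B

/-- `QEquiv le A B C D` : `A|B ∼ C|D`, i.e. both directions of `⪯` hold. -/
def QEquiv {Δ : Type*} (le : Set Δ → Set Δ → Set Δ → Set Δ → Prop) (A B C D : Set Δ) : Prop :=
  le A B C D ∧ le C D A B

/-- A qualitative conditional probability structure on `Δ`: a relation
`le A B C D` (read `A|B ⪯ C|D`, meaningful when the conditioning events `B`, `D`
are non-null) satisfying Axioms 1–6 of Krantz et al. -/
structure QCP (Δ : Type*) where
  le : Set Δ → Set Δ → Set Δ → Set Δ → Prop
  /-- Axiom 1: totality. -/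
  total : ∀ A B C D, ¬ QNull le B → ¬ QNull le D → le A B C D ∨ le C D A B
  /-- Axiom 1: reflexivity. -/
  refl : ∀ A B, ¬ QNull le B → le A B A B
  /-- Axiom 1: transitivity. -/
  trans : ∀ A B C D E F, ¬ QNull le B → ¬ QNull le D → ¬ QNull le F →
      le A B C D → le C D E F → le A B E F
  /-- Axiom 2: the sure event is not null. -/
  univ_not_null : ¬ QNull le (univ : Set Δ)
  /-- Axiom 3: `A|A ∼ B|B`. -/
  ax3_id : ∀ A B, ¬ QNull le A → ¬ QNull le B → QEquiv le A A B B
  /-- Axiom 3: `A|B ⪯ Δ|C` for non-null `C`. -/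
  ax3_bound : ∀ A B C, ¬ QNull le B → ¬ QNull le C → le A B univ C
  /-- Axiom 4: `(A∩B)|B ∼ A|B`. -/
  ax4 : ∀ A B, ¬ QNull le B → QEquiv le (A ∩ B) B A B
  /-- Axiom 5: disjoint additivity. -/
  ax5 : ∀ A B A' B' C C', ¬ QNull le C → ¬ QNull le C' → A ∩ B = ∅ → A' ∩ B' = ∅ →
      le A C A' C' → le B C B' C' → le (A ∪ B) C (A' ∪ B') C'
  /-- Axiom 5, strictness clause. -/
  ax5_strict : ∀ A B A' B' C C', ¬ QNull le C → ¬ QNull le C' → A ∩ B = ∅ → A' ∩ B' = ∅ →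
      le A C A' C' → le B C B' C' → (QLt le A C A' C' ∨ QLt le B C B' C') →
      QLt le (A ∪ B) C (A' ∪ B') C'
  /-- Axiom 6a. -/
  ax6a : ∀ A B C A' B' C', C ⊆ B → B ⊆ A → C' ⊆ B' → B' ⊆ A' →
      ¬ QNull le A → ¬ QNull le B → ¬ QNull le A' → ¬ QNull le B' →
      le B A C' B' → le C B B' A' → le C A C' A'
  /-- Axiom 6a, strictness clause. -/
  ax6a_strict : ∀ A B C A' B' C', C ⊆ B → B ⊆ A → C' ⊆ B' → B' ⊆ A' →
      ¬ QNull le A → ¬ QNull le B → ¬ QNull le A' → ¬ QNull le B' →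
      le B A C' B' → le C B B' A' → (QLt le B A C' B' ∨ QLt le C B B' A') →
      QLt le C A C' A'
  /-- Axiom 6b. -/
  ax6b : ∀ A B C A' B' C', C ⊆ B → B ⊆ A → C' ⊆ B' → B' ⊆ A' →
      ¬ QNull le A → ¬ QNull le B → ¬ QNull le A' → ¬ QNull le B' →
      le B A B' A' → le C B C' B' → le C A C' A'
  /-- Axiom 6b, strictness clause. -/
  ax6b_strict : ∀ A B C A' B' C', C ⊆ B → B ⊆ A → C' ⊆ B' → B' ⊆ A' →
      ¬ QNull le A → ¬ QNull le B → ¬ QNull le A' → ¬ QNull le B' →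
      le B A B' A' → le C B C' B' → (QLt le B A B' A' ∨ QLt le C B C' B') →
      ¬ QNull le C → QLt le C A C' A'


section QCPHelpers

variable {Δ : Type*} (q : QCP Δ)

lemma qcp_empty_le (X C C' : Set Δ) (hC : ¬ QNull q.le C) (hC' : ¬ QNull q.le C') :
    q.le ∅ C X C' := by
  by_contra hn
  have h1 : q.le X C' ∅ C := (q.total ∅ C X C' hC hC').resolve_left hn
  have hlt : QLt q.le X C' ∅ C := ⟨h1, hn⟩
  have h2 : q.le Xᶜ C' univ C := q.ax3_bound Xᶜ C' C hC' hC
  have h3 := q.ax5_strict X Xᶜ ∅ univ C' C hC' hC (by simp) (by simp) h1 h2 (Or.inl hlt)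
  rw [union_compl_self, empty_union] at h3
  exact h3.2 (q.ax3_bound univ C C' hC hC')

lemma qcp_mono (X Y C : Set Δ) (hC : ¬ QNull q.le C) (hXY : X ⊆ Y) :
    q.le X C Y C := by
  have h3 := q.ax5 X ∅ X (Y \ X) C C hC hC (inter_empty X) (inter_diff_self X Y)
    (q.refl X C hC) (qcp_empty_le q (Y \ X) C C hC hC)
  rwa [union_empty, union_diff_cancel hXY] at h3

lemma qcp_null_subset (X Y : Set Δ) (hXY : X ⊆ Y) (hY : QNull q.le Y) : QNull q.le X :=
  q.trans X univ Y univ ∅ univ q.univ_not_null q.univ_not_null q.univ_not_null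
    (qcp_mono q X Y univ q.univ_not_null hXY) hY

lemma qcp_nonnull_superset (X Y : Set Δ) (hXY : X ⊆ Y) (hX : ¬ QNull q.le X) :
    ¬ QNull q.le Y := fun hY => hX (qcp_null_subset q X Y hXY hY)

lemma qcp_lt_of_lt_of_le {A B C D E F : Set Δ} (hB : ¬ QNull q.le B) (hD : ¬ QNull q.le D)
    (hF : ¬ QNull q.le F) (h1 : QLt q.le A B C D) (h2 : q.le C D E F) :
    QLt q.le A B E F :=
  ⟨q.trans A B C D E F hB hD hF h1.1 h2,
   fun hle => h1.2 (q.trans C D E F A B hD hF hB h2 hle)⟩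

lemma qcp_lt_of_le_of_lt {A B C D E F : Set Δ} (hB : ¬ QNull q.le B) (hD : ¬ QNull q.le D)
    (hF : ¬ QNull q.le F) (h1 : q.le A B C D) (h2 : QLt q.le C D E F) :
    QLt q.le A B E F :=
  ⟨q.trans A B C D E F hB hD hF h1 h2.1,
   fun hle => h2.2 (q.trans E F A B C D hF hB hD hle h1)⟩

/-- Congruence of the strict order with Axiom 4: `E|C ≺ E'|C'` iff `(E∩C)|C ≺ (E'∩C')|C'`. -/
lemma qcp_lt_inter {E C E' C' : Set Δ} (hC : ¬ QNull q.le C) (hC' : ¬ QNull q.le C')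
    (h : QLt q.le E C E' C') : QLt q.le (E ∩ C) C (E' ∩ C') C' := by
  have e1 := q.ax4 E C hC
  have e2 := q.ax4 E' C' hC'
  constructor
  · exact q.trans (E ∩ C) C E C (E' ∩ C') C' hC hC hC' e1.1
      (q.trans E C E' C' (E' ∩ C') C' hC hC' hC' h.1 e2.2)
  · intro hle
    exact h.2 (q.trans E' C' (E ∩ C) C E C hC' hC hC
      (q.trans E' C' (E' ∩ C') C' (E ∩ C) C hC' hC' hC e2.2 hle) e1.1)

/-- If `A ⊆ H` is null and `H` is non-null, then `A|H ∼ ∅|Δ`, i.e. `A|H ⪯ ∅|Δ`. -/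
lemma qcp_null_cond (A H : Set Δ) (hAH : A ⊆ H) (nnH : ¬ QNull q.le H)
    (hnull : QNull q.le A) : q.le A H ∅ univ := by
  have nnU := q.univ_not_null
  have hBc : q.le H univ (H \ A) univ := by
    have h3 := q.ax5 A (H \ A) ∅ (H \ A) univ univ nnU nnU (inter_diff_self A H)
      (empty_inter _) hnull (q.refl (H \ A) univ nnU)
    rwa [union_diff_cancel hAH, empty_union] at h3
  have nnBc : ¬ QNull q.le (H \ A) := fun hBn =>
    nnH (q.trans H univ (H \ A) univ ∅ univ nnU nnU nnU hBc hBn)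
  by_contra hn
  have hltH : QLt q.le ∅ H A H :=
    ⟨qcp_empty_le q A H H nnH nnH,
     fun hle => hn (q.trans A H ∅ H ∅ univ nnH nnH nnU hle (qcp_empty_le q ∅ H univ nnH nnU))⟩
  have h5 := q.ax5_strict ∅ (H \ A) A (H \ A) H H nnH nnH (empty_inter _)
    (inter_diff_self A H) hltH.1 (q.refl (H \ A) H nnH) (Or.inl hltH)
  rw [empty_union, union_diff_cancel hAH] at h5
  have h6 := q.ax6b_strict univ H (H \ A) univ H H diff_subset (subset_univ H)
    (subset_refl H) (subset_univ H) nnU nnH nnU nnH (q.refl H univ nnU) h5.1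
    (Or.inr h5) nnBc
  exact h6.2 hBc

/-- From `Ai|Hi ≺ A|H` (chains `Ai ⊆ Hi ⊆ H`, `Ai ⊆ A ⊆ H`) conclude `Ai|A ≺ Hi|H`. -/
lemma qcp_aux_a {Ai Hi A H : Set Δ} (h1 : Ai ⊆ Hi) (h2 : Hi ⊆ H) (h3 : Ai ⊆ A)
    (h4 : A ⊆ H) (nnHi : ¬ QNull q.le Hi) (nnH : ¬ QNull q.le H) (nnA : ¬ QNull q.le A)
    (hlt : QLt q.le Ai Hi A H) : QLt q.le Ai A Hi H := by
  have hnle : ¬ q.le Hi H Ai A := by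
    intro hle
    have hc := q.ax6a_strict H Hi Ai H A Ai h1 h2 h3 h4 nnH nnHi nnH nnA hle hlt.1
      (Or.inr hlt)
    exact hc.2 hc.1
  exact ⟨(q.total Hi H Ai A nnH nnA).resolve_left hnle, hnle⟩

/-- From `A|H ≺ Ai|Hi` (chains `Ai ⊆ Hi ⊆ H`, `Ai ⊆ A ⊆ H`) conclude `Hi|H ≺ Ai|A`. -/
lemma qcp_aux_b {Ai Hi A H : Set Δ} (h1 : Ai ⊆ Hi) (h2 : Hi ⊆ H) (h3 : Ai ⊆ A)
    (h4 : A ⊆ H) (nnHi : ¬ QNull q.le Hi) (nnH : ¬ QNull q.le H) (nnA : ¬ QNull q.le A)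
    (hlt : QLt q.le A H Ai Hi) : QLt q.le Hi H Ai A := by
  have hnle : ¬ q.le Ai A Hi H := by
    intro hle
    have hc := q.ax6a_strict H A Ai H Hi Ai h3 h4 h1 h2 nnH nnA nnH nnHi hlt.1 hle
      (Or.inl hlt)
    exact hc.2 hc.1
  exact ⟨(q.total Hi H Ai A nnH nnA).resolve_right hnle, hnle⟩

end QCPHelpers

/-- if `H₁`, `H₂` are disjoint, non-null and `E|H₁ ∼ E|H₂`,
then `E|(H₁ ∪ H₂) ∼ E|H₁ ∼ E|H₂`. -/
theorem qcp_equal_conditionals_union {Δ : Type*} (q : QCP Δ) (E H1 H2 : Set Δ)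
    (hdisj : H1 ∩ H2 = ∅) (hH1 : ¬ QNull q.le H1) (hH2 : ¬ QNull q.le H2)
    (h : QEquiv q.le E H1 E H2) :
    QEquiv q.le E (H1 ∪ H2) E H1 ∧ QEquiv q.le E (H1 ∪ H2) E H2 := by
  obtain ⟨h12, h21⟩ := h
  have nnU := q.univ_not_null
  have hH : ¬ QNull q.le (H1 ∪ H2) :=
    qcp_nonnull_superset q H1 (H1 ∪ H2) subset_union_left hH1
  have hA12 : (E ∩ H1) ∩ (E ∩ H2) = ∅ := by
    have hsub : (E ∩ H1) ∩ (E ∩ H2) ⊆ H1 ∩ H2 :=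
      fun x hx => ⟨hx.1.2, hx.2.2⟩
    exact subset_empty_iff.mp (hdisj ▸ hsub)
  have hAunion : (E ∩ H1) ∪ (E ∩ H2) = E ∩ (H1 ∪ H2) :=
    (inter_union_distrib_left E H1 H2).symm
  have e1 := q.ax4 E H1 hH1
  have e2 := q.ax4 E H2 hH2
  have eH := q.ax4 E (H1 ∪ H2) hH
  -- direction 1 : E | (H1 ∪ H2) ⪯ E | H1
  have key1 : q.le E (H1 ∪ H2) E H1 := by
    by_contra hn
    have hlt1 : QLt q.le E H1 E (H1 ∪ H2) :=
      ⟨(q.total E (H1 ∪ H2) E H1 hH hH1).resolve_left hn, hn⟩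
    have hlt2 : QLt q.le E H2 E (H1 ∪ H2) :=
      qcp_lt_of_le_of_lt q hH2 hH1 hH h21 hlt1
    by_cases hA : QNull q.le (E ∩ (H1 ∪ H2))
    · -- then E|(H1∪H2) ~ ∅, contradicting E|H1 ≺ E|(H1∪H2)
      have hc : q.le E (H1 ∪ H2) ∅ univ :=
        q.trans E (H1 ∪ H2) (E ∩ (H1 ∪ H2)) (H1 ∪ H2) ∅ univ hH hH nnU eH.2
          (qcp_null_cond q (E ∩ (H1 ∪ H2)) (H1 ∪ H2) inter_subset_right hH hA)
      exact hlt1.2 (q.trans E (H1 ∪ H2) ∅ univ E H1 hH nnU hH1 hc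
        (qcp_empty_le q E univ H1 nnU hH1))
    · have hq1 : QLt q.le (E ∩ H1) (E ∩ (H1 ∪ H2)) H1 (H1 ∪ H2) :=
        qcp_aux_a q inter_subset_right subset_union_left
          (inter_subset_inter_right E subset_union_left) inter_subset_right
          hH1 hH hA (qcp_lt_inter q hH1 hH hlt1)
      have hq2 : QLt q.le (E ∩ H2) (E ∩ (H1 ∪ H2)) H2 (H1 ∪ H2) :=
        qcp_aux_a q inter_subset_right subset_union_right
          (inter_subset_inter_right E subset_union_right) inter_subset_right
          hH2 hH hA (qcp_lt_inter q hH2 hH hlt2)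
      have h5 := q.ax5_strict (E ∩ H1) (E ∩ H2) H1 H2 (E ∩ (H1 ∪ H2)) (H1 ∪ H2)
        hA hH hA12 hdisj hq1.1 hq2.1 (Or.inl hq1)
      rw [hAunion] at h5
      exact h5.2 (q.ax3_id (H1 ∪ H2) (E ∩ (H1 ∪ H2)) hH hA).1
  -- direction 2 : E | H1 ⪯ E | (H1 ∪ H2)
  have key2 : q.le E H1 E (H1 ∪ H2) := by
    by_contra hn
    have hlt1 : QLt q.le E (H1 ∪ H2) E H1 :=
      ⟨(q.total E H1 E (H1 ∪ H2) hH1 hH).resolve_left hn, hn⟩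
    have hlt2 : QLt q.le E (H1 ∪ H2) E H2 :=
      qcp_lt_of_lt_of_le q hH hH1 hH2 hlt1 h12
    by_cases hA : QNull q.le (E ∩ (H1 ∪ H2))
    · have hA1 : QNull q.le (E ∩ H1) :=
        qcp_null_subset q (E ∩ H1) (E ∩ (H1 ∪ H2))
          (inter_subset_inter_right E subset_union_left) hA
      have hc : q.le E H1 ∅ univ :=
        q.trans E H1 (E ∩ H1) H1 ∅ univ hH1 hH1 nnU e1.2
          (qcp_null_cond q (E ∩ H1) H1 inter_subset_right hH1 hA1)
      exact hlt1.2 (q.trans E H1 ∅ univ E (H1 ∪ H2) hH1 nnU hH hc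
        (qcp_empty_le q E univ (H1 ∪ H2) nnU hH))
    · have hq1 : QLt q.le H1 (H1 ∪ H2) (E ∩ H1) (E ∩ (H1 ∪ H2)) :=
        qcp_aux_b q inter_subset_right subset_union_left
          (inter_subset_inter_right E subset_union_left) inter_subset_right
          hH1 hH hA (qcp_lt_inter q hH hH1 hlt1)
      have hq2 : QLt q.le H2 (H1 ∪ H2) (E ∩ H2) (E ∩ (H1 ∪ H2)) :=
        qcp_aux_b q inter_subset_right subset_union_right
          (inter_subset_inter_right E subset_union_right) inter_subset_right
          hH2 hH hA (qcp_lt_inter q hH hH2 hlt2)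
      have h5 := q.ax5_strict H1 H2 (E ∩ H1) (E ∩ H2) (H1 ∪ H2) (E ∩ (H1 ∪ H2))
        hH hA hdisj hA12 hq1.1 hq2.1 (Or.inl hq1)
      rw [hAunion] at h5
      exact h5.2 (q.ax3_id (E ∩ (H1 ∪ H2)) (H1 ∪ H2) hA hH).1
  refine ⟨⟨key1, key2⟩, ⟨?_, ?_⟩⟩
  · exact q.trans E (H1 ∪ H2) E H1 E H2 hH hH1 hH2 key1 h12
  · exact q.trans E H2 E H1 E (H1 ∪ H2) hH2 hH1 hH h21 key2
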